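/- arXiv:1211.0783 — 9 statements merged into one kernel-verified Lean document; each statement's English description precedes it below -/
import Mathlib

section
/- For every k ≥ 1 and every n ≥ 1, the sequence m ↦ T^k_{(n,m)} is decreasing in m; that is, T^k_{(n,m)} ≥ T^k_{(n,m+1)} for all m ≥ 1. -/
/-- The Cesàro operator on real sequences (indexed from 1; index 0 is unused):
`[T(a)]_n = (a_1 + ⋯ + a_n)/n`. -/
noncomputable def cesaro (a : ℕ → ℝ) : ℕ → ℝ :=
  fun n => (∑ i ∈ Finset.Icc 1 n, a i) / n

/-- The matrix entry `T^k_{(n,m)} = [T^k(e_m)]_n` where `e_m` is the sequence whose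
`m`-th term is `1` and all other terms are `0`. -/
noncomputable def cesaroEntry (k n m : ℕ) : ℝ :=
  (cesaro^[k] (fun i => if i = m then (1 : ℝ) else 0)) n

/-! Since `T` is a positive operator, `T^{k+1}_{(n,m+1)} ≤ T^{k+1}_{(n,m)}` follows from the same
inequality for `T^k` at every row `i ≥ 1`. This reduces the claim to `k = 1`, where
`T_{(n,m)} = 1/n` for `1 ≤ m ≤ n` and `0` otherwise. -/

lemma cesaro_mono {a b : ℕ → ℝ} (h : ∀ i, 1 ≤ i → a i ≤ b i) (n : ℕ) :
    cesaro a n ≤ cesaro b n := by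
  unfold cesaro
  gcongr with i hi
  exact h i (Finset.mem_Icc.mp hi).1

lemma cesaro_nonneg {a : ℕ → ℝ} (h : ∀ i, 0 ≤ a i) (n : ℕ) : 0 ≤ cesaro a n := by
  unfold cesaro
  exact div_nonneg (Finset.sum_nonneg fun i _ => h i) n.cast_nonneg

lemma cesaroEntry_succ (k n m : ℕ) :
    cesaroEntry (k + 1) n m = cesaro (fun i => cesaroEntry k i m) n := by
  simp only [cesaroEntry, Function.iterate_succ', Function.comp_apply]

lemma cesaroEntry_one (n m : ℕ) :
    cesaroEntry 1 n m = if m ∈ Finset.Icc 1 n then (n : ℝ)⁻¹ else 0 := by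
  simp [cesaroEntry, cesaro, Finset.sum_ite_eq', ite_div]

lemma cesaroEntry_nonneg (k n m : ℕ) : 0 ≤ cesaroEntry k n m := by
  induction k generalizing n with
  | zero =>
      simp only [cesaroEntry, Function.iterate_zero_apply]
      split_ifs <;> norm_num
  | succ k ih =>
      rw [cesaroEntry_succ]
      exact cesaro_nonneg ih n

theorem cesaroEntry_antitone_general (k n m : ℕ) (hk : 1 ≤ k) (hm : 1 ≤ m) :
    cesaroEntry k n (m + 1) ≤ cesaroEntry k n m := by
  induction k, hk using Nat.le_induction generalizing n with
  | base =>
      by_cases h : m + 1 ≤ n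
      · rw [cesaroEntry_one, cesaroEntry_one, if_pos (Finset.mem_Icc.mpr ⟨by omega, h⟩),
          if_pos (Finset.mem_Icc.mpr ⟨hm, by omega⟩)]
      · rw [cesaroEntry_one, if_neg fun hmem => h (Finset.mem_Icc.mp hmem).2]
        exact cesaroEntry_nonneg 1 n m
  | succ k _ ih =>
      rw [cesaroEntry_succ, cesaroEntry_succ]
      exact cesaro_mono (fun i _ => ih i) n

/-- For every `k ≥ 1` and `n ≥ 1`, the sequence `m ↦ T^k_{(n,m)}` is decreasing in `m`:
`T^k_{(n,m)} ≥ T^k_{(n,m+1)}` for all `m ≥ 1`. -/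
theorem cesaroEntry_antitone (k n m : ℕ) (hk : 1 ≤ k) (hn : 1 ≤ n) (hm : 1 ≤ m) :
    cesaroEntry k n (m + 1) ≤ cesaroEntry k n m :=
  cesaroEntry_antitone_general k n m hk hm
end

section
/- For every k ≥ 1, every n ≥ 1, and every m ≥ 1, it holds that T^k_{(n,m)} ≤ (1/n)·[1 + (log n)/1! + (log n)²/2! + ⋯ + (log n)^{k−1}/(k−1)!], where log denotes the natural logarithm. -/
open Finset Real
open scoped Nat

noncomputable def expPartialSum (k : ℕ) (y : ℝ) : ℝ := ∑ i ∈ range k, y ^ i / i !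

lemma expPartialSum_succ (k : ℕ) (y : ℝ) :
    expPartialSum (k + 1) y = expPartialSum k y + y ^ k / k ! :=
  sum_range_succ _ _

lemma expPartialSum_le_succ (k : ℕ) {y : ℝ} (hy : 0 ≤ y) :
    expPartialSum k y ≤ expPartialSum (k + 1) y := by
  rw [expPartialSum_succ]
  exact le_add_of_nonneg_right (by positivity)

lemma hasDerivAt_expPartialSum (k : ℕ) (y : ℝ) :
    HasDerivAt (expPartialSum (k + 1)) (expPartialSum k y) y := by
  induction k with
  | zero =>
    have hone : expPartialSum 1 = fun _ => 1 := funext fun z => by simp [expPartialSum]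
    simpa [hone, expPartialSum] using hasDerivAt_const y (1 : ℝ)
  | succ k ih =>
    have hpow : HasDerivAt (fun y : ℝ => y ^ (k + 1) / (k + 1)!) (y ^ k / k !) y := by
      refine ((hasDerivAt_pow (k + 1) y).div_const _).congr_deriv ?_
      rw [Nat.factorial_succ]
      push_cast
      field_simp
    rw [funext (expPartialSum_succ (k + 1)), expPartialSum_succ]
    exact ih.add hpow

lemma hasDerivAt_expPartialSum_log (k : ℕ) {x : ℝ} (hx : 0 < x) :
    HasDerivAt (fun x => expPartialSum (k + 1) (log x)) (expPartialSum k (log x) / x) x := by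
  rw [div_eq_mul_inv]
  exact (hasDerivAt_expPartialSum k (log x)).comp x (hasDerivAt_log hx.ne')

lemma antitoneOn_expPartialSum_log_div (k : ℕ) :
    AntitoneOn (fun x => expPartialSum k (log x) / x) (Set.Ici 1) := by
  cases k with
  | zero => simpa [expPartialSum] using antitoneOn_const
  | succ k =>
    have hderiv : ∀ x ∈ Set.Ici (1 : ℝ), HasDerivAt (fun x => expPartialSum (k + 1) (log x) / x)
        ((expPartialSum k (log x) - expPartialSum (k + 1) (log x)) / x ^ 2) x := by
      intro x hx
      have hx0 : 0 < x := by rw [Set.mem_Ici] at hx; linarith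
      refine ((hasDerivAt_expPartialSum_log k hx0).fun_div (hasDerivAt_id x)
        hx0.ne').congr_deriv ?_
      simp only [id, mul_one]
      field_simp
    refine antitoneOn_of_hasDerivWithinAt_nonpos (convex_Ici 1)
      (fun x hx => (hderiv x hx).continuousAt.continuousWithinAt)
      (fun x hx => (hderiv x (interior_subset hx)).hasDerivWithinAt) fun x hx => ?_
    rw [interior_Ici, Set.mem_Ioi] at hx
    have := expPartialSum_le_succ k (log_nonneg hx.le)
    exact div_nonpos_of_nonpos_of_nonneg (by linarith) (by positivity)

lemma expPartialSum_log_div_le_sub (k : ℕ) {a : ℝ} (ha : 1 ≤ a) :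
    expPartialSum k (log (a + 1)) / (a + 1) ≤
      expPartialSum (k + 1) (log (a + 1)) - expPartialSum (k + 1) (log a) := by
  obtain ⟨c, ⟨hac, hca⟩, hslope⟩ := exists_hasDerivAt_eq_slope
    (fun x => expPartialSum (k + 1) (log x)) (fun x => expPartialSum k (log x) / x)
    (lt_add_one a)
    (fun x hx =>
      (hasDerivAt_expPartialSum_log k (by linarith [hx.1])).continuousAt.continuousWithinAt)
    (fun x hx => hasDerivAt_expPartialSum_log k (by linarith [hx.1]))
  rw [add_sub_cancel_left, div_one] at hslope
  rw [← hslope]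
  exact antitoneOn_expPartialSum_log_div k (Set.mem_Ici.mpr (by linarith))
    (Set.mem_Ici.mpr (by linarith)) hca.le

lemma sum_expPartialSum_log_div_le (k : ℕ) {n : ℕ} (hn : 1 ≤ n) :
    ∑ j ∈ Icc 1 n, expPartialSum k (log j) / j ≤ expPartialSum (k + 1) (log n) := by
  induction n, hn using Nat.le_induction with
  | base => simpa using expPartialSum_le_succ k le_rfl
  | succ n hn ih =>
    rw [sum_Icc_succ_top (by omega)]
    have hstep := expPartialSum_log_div_le_sub k (a := n) (by exact_mod_cast hn)
    push_cast
    linarith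

lemma cesaro_le_one_div {a : ℕ → ℝ} (ha : ∀ n, ∑ i ∈ Icc 1 n, a i ≤ 1) (n : ℕ) :
    cesaro a n ≤ 1 / n :=
  div_le_div_of_nonneg_right (ha n) n.cast_nonneg

lemma cesaro_le_expPartialSum_log_div {a : ℕ → ℝ} {k n : ℕ}
    (ha : ∀ j ∈ Icc 1 n, a j ≤ expPartialSum k (log j) / j) (hn : 1 ≤ n) :
    cesaro a n ≤ expPartialSum (k + 1) (log n) / n :=
  calc cesaro a n ≤ (∑ j ∈ Icc 1 n, expPartialSum k (log j) / j) / n :=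
        div_le_div_of_nonneg_right (sum_le_sum ha) n.cast_nonneg
    _ ≤ expPartialSum (k + 1) (log n) / n :=
        div_le_div_of_nonneg_right (sum_expPartialSum_log_div_le k hn) n.cast_nonneg

lemma cesaro_iterate_le {a : ℕ → ℝ} (ha : ∀ n, ∑ i ∈ Icc 1 n, a i ≤ 1) {k : ℕ} (hk : 1 ≤ k)
    {n : ℕ} (hn : 1 ≤ n) : cesaro^[k] a n ≤ expPartialSum k (log n) / n := by
  induction k, hk using Nat.le_induction generalizing n with
  | base => simpa [expPartialSum] using cesaro_le_one_div ha n
  | succ k _ ih =>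
    rw [Function.iterate_succ_apply']
    exact cesaro_le_expPartialSum_log_div (fun j hj => ih (mem_Icc.mp hj).1) hn

lemma sum_Icc_single_le_one (m n : ℕ) : ∑ i ∈ Icc 1 n, (if i = m then (1 : ℝ) else 0) ≤ 1 := by
  rw [sum_ite_eq']
  split_ifs <;> norm_num

theorem cesaroEntry_le_log_bound_general (k n m : ℕ) (hk : 1 ≤ k) (hn : 1 ≤ n) :
    cesaroEntry k n m ≤
      (1 / n) * ∑ i ∈ Finset.range k, (Real.log n) ^ i / (Nat.factorial i) := by
  unfold cesaroEntry
  rw [one_div_mul_eq_div]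
  exact cesaro_iterate_le (sum_Icc_single_le_one m) hk hn

/-- For every `k ≥ 1`, `n ≥ 1`, `m ≥ 1`:
`T^k_{(n,m)} ≤ (1/n)·[1 + (log n)/1! + ⋯ + (log n)^{k−1}/(k−1)!]`. -/
theorem cesaroEntry_le_log_bound (k n m : ℕ) (hk : 1 ≤ k) (hn : 1 ≤ n) (hm : 1 ≤ m) :
    cesaroEntry k n m ≤
      (1 / n) * ∑ i ∈ Finset.range k, (Real.log n) ^ i / (Nat.factorial i) :=
  cesaroEntry_le_log_bound_general k n m hk hn
end

section
/- For every fixed k ≥ 1 and m ≥ 1, the matrix entries of the iterated Cesàro operator tend to zero along the rows: lim_{n→∞} T^k_{(n,m)} = 0. -/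
open Filter Topology Finset

lemma cesaro_eq_inv_mul_sum_range (a : ℕ → ℝ) (n : ℕ) :
    cesaro a n = (n⁻¹ : ℝ) * ∑ i ∈ range n, a (i + 1) := by
  rw [cesaro, div_eq_inv_mul, range_eq_Ico, ← Ico_add_one_right_eq_Icc, sum_Ico_add' a 0 n 1]

lemma tendsto_cesaro {a : ℕ → ℝ} {l : ℝ} (h : Tendsto a atTop (𝓝 l)) :
    Tendsto (cesaro a) atTop (𝓝 l) := by
  have h_shift : Tendsto (fun i => a (i + 1)) atTop (𝓝 l) := h.comp (tendsto_add_atTop_nat 1)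
  exact h_shift.cesaro.congr fun n => (cesaro_eq_inv_mul_sum_range a n).symm

lemma tendsto_cesaro_iterate {a : ℕ → ℝ} {l : ℝ} (h : Tendsto a atTop (𝓝 l)) (k : ℕ) :
    Tendsto (cesaro^[k] a) atTop (𝓝 l) := by
  induction k generalizing a with
  | zero => exact h
  | succ k ih => exact ih (tendsto_cesaro h)

theorem cesaroEntry_tendsto_zero_general (k m : ℕ) :
    Filter.Tendsto (fun n => cesaroEntry k n m) Filter.atTop (nhds 0) := by
  have unit_vector_tendsto : Tendsto (fun i => if i = m then (1 : ℝ) else 0) atTop (𝓝 0) :=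
    tendsto_const_nhds.congr' <| eventually_atTop.2 ⟨m + 1, fun n hn => (if_neg (by omega)).symm⟩
  exact tendsto_cesaro_iterate unit_vector_tendsto k

/-- For fixed `k ≥ 1` and `m ≥ 1`, the matrix entries of `T^k` tend to `0` along the rows:
`lim_{n→∞} T^k_{(n,m)} = 0`. -/
theorem cesaroEntry_tendsto_zero (k m : ℕ) (hk : 1 ≤ k) (hm : 1 ≤ m) :
    Filter.Tendsto (fun n => cesaroEntry k n m) Filter.atTop (nhds 0) :=
  cesaroEntry_tendsto_zero_general k m
end

section
/- For all k, n, λ ≥ 1, it holds that ∑_{i=1}^{λ} T^k_{(n+λ, n+i)} ≥ (λ/(n+λ))^k · (1/k!). -/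
open Finset
open scoped Nat

theorem pow_succ_div_le_sum_Icc_pow (j s : ℕ) : (s : ℝ) ^ (j + 1) / (j + 1) ≤ ∑ t ∈ Icc 1 s, (t : ℝ) ^ j := by
  have h := (pow_left_monotoneOn (M₀ := ℝ) (n := j)).mono
    (s₂ := Set.Icc 0 (0 + (s : ℝ))) (fun _ hx => hx.1) |>.integral_le_sum
  rw [← Ico_add_one_right_eq_Icc, ← zero_add 1, ← sum_Ico_add', ← range_eq_Ico]
  simpa using h

noncomputable def cesaroLinearMap : Module.End ℝ (ℕ → ℝ) where
  toFun := cesaro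
  map_add' a b := by
    funext n
    simp only [cesaro, Pi.add_apply, sum_add_distrib, add_div]
  map_smul' c a := by
    funext n
    simp only [cesaro, Pi.smul_apply, smul_eq_mul, ← mul_sum, mul_div_assoc, RingHom.id_apply]

theorem cesaro_iterate_sum {ι : Type*} (s : Finset ι) (f : ι → ℕ → ℝ) (k : ℕ) :
    cesaro^[k] (∑ i ∈ s, f i) = ∑ i ∈ s, cesaro^[k] (f i) := by
  have hk : cesaro^[k] = ⇑(cesaroLinearMap ^ k) := (Module.End.coe_pow cesaroLinearMap k).symm
  rw [hk, map_sum]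

theorem cesaro_nonneg_s6 {a : ℕ → ℝ} (ha : 0 ≤ a) : 0 ≤ cesaro a :=
  fun _ => div_nonneg (sum_nonneg fun i _ => ha i) (Nat.cast_nonneg _)

theorem cesaro_iterate_nonneg {a : ℕ → ℝ} (ha : 0 ≤ a) (k : ℕ) : 0 ≤ cesaro^[k] a := by
  induction k with
  | zero => exact ha
  | succ k ih => exact Function.iterate_succ_apply' cesaro k a ▸ cesaro_nonneg_s6 ih

theorem le_cesaro_iterate_apply_add {a : ℕ → ℝ} {n l : ℕ} (ha : 0 ≤ a)
    (h_one : ∀ t ∈ Icc 1 l, 1 ≤ a (n + t)) (j : ℕ) :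
    ∀ t ∈ Icc 1 l, ((t : ℝ) / (n + t : ℕ)) ^ j / j ! ≤ cesaro^[j] a (n + t) := by
  induction j with
  | zero => simpa using h_one
  | succ j ih =>
    intro t ht
    obtain ⟨ht1, htl⟩ := mem_Icc.mp ht
    set b := cesaro^[j] a
    have hb : 0 ≤ b := cesaro_iterate_nonneg ha j
    have hnt : (0 : ℝ) < (n + t : ℕ) := Nat.cast_pos.mpr (by omega)
    have h_shift : ∑ s ∈ Icc 1 t, b (n + s) ≤ ∑ i ∈ Icc 1 (n + t), b i := by
      have h : ∑ s ∈ Icc 1 t, b (n + s) = ∑ i ∈ Icc (n + 1) (n + t), b i := by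
        rw [← map_add_left_Icc, sum_map]; rfl
      rw [h]
      exact sum_le_sum_of_subset_of_nonneg (Icc_subset_Icc (by omega) le_rfl) fun i _ _ => hb i
    calc ((t : ℝ) / (n + t : ℕ)) ^ (j + 1) / (j + 1)!
        = (t : ℝ) ^ (j + 1) / (j + 1) / ((n + t : ℕ) ^ j * j !) / (n + t : ℕ) := by
          rw [Nat.factorial_succ, Nat.cast_mul, Nat.cast_succ, div_pow]; field_simp; ring
      _ ≤ (∑ s ∈ Icc 1 t, (s : ℝ) ^ j) / ((n + t : ℕ) ^ j * j !) / (n + t : ℕ) := by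
          gcongr; exact pow_succ_div_le_sum_Icc_pow j t
      _ = (∑ s ∈ Icc 1 t, ((s : ℝ) / (n + t : ℕ)) ^ j / j !) / (n + t : ℕ) := by
          rw [sum_div]
          simp_rw [div_pow, div_div]
      _ ≤ (∑ s ∈ Icc 1 t, b (n + s)) / (n + t : ℕ) := by
          gcongr with s hs
          obtain ⟨hs1, hst⟩ := mem_Icc.mp hs
          calc ((s : ℝ) / (n + t : ℕ)) ^ j / j ! ≤ ((s : ℝ) / (n + s : ℕ)) ^ j / j ! := by
                gcongr
            _ ≤ b (n + s) := ih s (mem_Icc.mpr ⟨hs1, hst.trans htl⟩)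
      _ ≤ cesaro^[j + 1] a (n + t) := by
          rw [Function.iterate_succ_apply']
          exact div_le_div_of_nonneg_right h_shift hnt.le

theorem cesaroEntry_sum_lower_bound_general (k n l : ℕ) (hl : 1 ≤ l) :
    ((l : ℝ) / ((n + l : ℕ) : ℝ)) ^ k * (1 / (Nat.factorial k)) ≤
      ∑ i ∈ Finset.Icc 1 l, cesaroEntry k (n + l) (n + i) := by
  set a : ℕ → ℝ := ∑ i ∈ Icc 1 l, fun x => if x = n + i then 1 else 0
  have ha : 0 ≤ a := sum_nonneg fun i _ x => by positivity
  have h_one : ∀ t ∈ Icc 1 l, 1 ≤ a (n + t) := fun t ht => by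
    simpa [a, Finset.sum_apply] using
      single_le_sum (f := fun i => if n + t = n + i then (1 : ℝ) else 0) (fun i _ => by positivity) ht
  have h_sum : ∑ i ∈ Icc 1 l, cesaroEntry k (n + l) (n + i) = cesaro^[k] a (n + l) := by
    rw [cesaro_iterate_sum, Finset.sum_apply]; rfl
  rw [h_sum, mul_one_div]
  exact le_cesaro_iterate_apply_add ha h_one k l (mem_Icc.mpr ⟨hl, le_rfl⟩)

/-- For all `k, n, λ ≥ 1`: `∑_{i=1}^{λ} T^k_{(n+λ, n+i)} ≥ (λ/(n+λ))^k · (1/k!)`. -/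
theorem cesaroEntry_sum_lower_bound (k n l : ℕ) (hk : 1 ≤ k) (hn : 1 ≤ n) (hl : 1 ≤ l) :
    ((l : ℝ) / ((n + l : ℕ) : ℝ)) ^ k * (1 / (Nat.factorial k)) ≤
      ∑ i ∈ Finset.Icc 1 l, cesaroEntry k (n + l) (n + i) :=
  cesaroEntry_sum_lower_bound_general k n l hl
end

section
/- Let k, n, λ, Λ ≥ 1 be natural numbers with λ < Λ and Λ ≤ n. For τ = 1, 2, …, λ define a_τ = T^k_{(n+λ, n+τ)} / T^k_{(n+Λ, n+τ)}. Then a_τ is decreasing in τ, and moreover 2 ≥ a_1 ≥ a_2 ≥ ⋯ ≥ a_λ > 0. -/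
open Finset

theorem mul_le_mul_of_antitone_ratio {a : ℕ → ℝ} (ha : ∀ r, 0 < a r)
    (hla : Antitone fun r => a (r + 1) / a r) {r p : ℕ} (hrp : r ≤ p) :
    a (p + 1) * a r ≤ a p * a (r + 1) := by
  have := hla hrp
  rw [div_le_div_iff₀ (ha p) (ha r)] at this
  linarith

/-- `b` is the convolution of `a` with `(1, y, y², …)`: its generating function is
`A(t) / (1 - yt)`. -/
structure IsGeomConv (y : ℝ) (a b : ℕ → ℝ) : Prop where
  zero : b 0 = a 0
  succ : ∀ r, b (r + 1) = a (r + 1) + y * b r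

namespace IsGeomConv

variable {y : ℝ} {a b : ℕ → ℝ}

theorem pos (hab : IsGeomConv y a b) (ha : ∀ r, 0 < a r) (hy : 0 ≤ y) (r : ℕ) : 0 < b r := by
  induction r with
  | zero => rw [hab.zero]; exact ha 0
  | succ r ih => rw [hab.succ]; exact add_pos_of_pos_of_nonneg (ha _) (mul_nonneg hy ih.le)

theorem cross_le (hab : IsGeomConv y a b) (ha : ∀ r, 0 < a r)
    (hla : Antitone fun r => a (r + 1) / a r) (hy : 0 ≤ y) {r p : ℕ} (hrp : r ≤ p) :
    a (p + 1) * b r ≤ a p * b (r + 1) := by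
  induction r with
  | zero =>
    calc a (p + 1) * b 0 = a (p + 1) * a 0 := by rw [hab.zero]
      _ ≤ a p * a 1 := mul_le_mul_of_antitone_ratio ha hla hrp
      _ ≤ a p * a 1 + y * (a p * b 0) :=
          le_add_of_nonneg_right (mul_nonneg hy (mul_pos (ha p) (hab.pos ha hy 0)).le)
      _ = a p * b 1 := by rw [hab.succ 0]; ring
  | succ r ih =>
    calc a (p + 1) * b (r + 1) = a (p + 1) * a (r + 1) + y * (a (p + 1) * b r) := by
          rw [hab.succ r]; ring
      _ ≤ a p * a (r + 2) + y * (a p * b (r + 1)) :=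
          add_le_add (mul_le_mul_of_antitone_ratio ha hla hrp)
            (mul_le_mul_of_nonneg_left (ih (by omega)) hy)
      _ = a p * b (r + 2) := by rw [hab.succ (r + 1)]; ring

theorem antitone_ratio (hab : IsGeomConv y a b) (ha : ∀ r, 0 < a r)
    (hla : Antitone fun r => a (r + 1) / a r) (hy : 0 ≤ y) :
    Antitone fun r => b (r + 1) / b r := by
  refine antitone_nat_of_succ_le fun r => ?_
  have hb := hab.pos ha hy
  rw [div_le_div_iff₀ (hb _) (hb _)]
  calc b (r + 1 + 1) * b r = a (r + 2) * b r + y * (b (r + 1) * b r) := by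
        rw [hab.succ (r + 1)]; ring
    _ ≤ a (r + 1) * b (r + 1) + y * (b (r + 1) * b r) :=
        add_le_add_left (hab.cross_le ha hla hy (Nat.le_succ r)) _
    _ = b (r + 1) * b (r + 1) := by rw [hab.succ r]; ring

theorem monotone_div (hab : IsGeomConv y a b) (ha : ∀ r, 0 < a r)
    (hla : Antitone fun r => a (r + 1) / a r) (hy : 0 ≤ y) :
    Monotone fun r => b r / a r := by
  refine monotone_nat_of_le_succ fun r => ?_
  rw [div_le_div_iff₀ (ha _) (ha _)]
  linarith [hab.cross_le ha hla hy (le_refl r)]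

end IsGeomConv

/-- `hsymmIcc w r s X` is the complete homogeneous symmetric polynomial of degree `r`
evaluated at `w s, …, w X`. -/
noncomputable def hsymmIcc (w : ℕ → ℝ) : ℕ → ℕ → ℕ → ℝ
  | 0, _, _ => 1
  | r + 1, s, X => ∑ j ∈ Icc s X, w j * hsymmIcc w r s j

section hsymmIcc

variable {w : ℕ → ℝ} {i q r s X Y : ℕ}

@[simp]
theorem hsymmIcc_zero (w : ℕ → ℝ) (s X : ℕ) : hsymmIcc w 0 s X = 1 := rfl

theorem hsymmIcc_succ (w : ℕ → ℝ) (r s X : ℕ) :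
    hsymmIcc w (r + 1) s X = ∑ j ∈ Icc s X, w j * hsymmIcc w r s j := rfl

theorem hsymmIcc_succ_of_lt (h : X < s) : hsymmIcc w (r + 1) s X = 0 := by
  rw [hsymmIcc_succ, Icc_eq_empty_of_lt h, sum_empty]

theorem hsymmIcc_self : hsymmIcc w r s s = w s ^ r := by
  induction r with
  | zero => rfl
  | succ r ih => rw [hsymmIcc_succ, Icc_self, sum_singleton, ih, pow_succ']

theorem hsymmIcc_succ_top (h : s ≤ X + 1) :
    hsymmIcc w (r + 1) s (X + 1) =
      hsymmIcc w (r + 1) s X + w (X + 1) * hsymmIcc w r s (X + 1) := by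
  rw [hsymmIcc_succ, hsymmIcc_succ, sum_Icc_succ_top h]

theorem hsymmIcc_succ_bot (h : s ≤ X) :
    hsymmIcc w (r + 1) s X = hsymmIcc w (r + 1) (s + 1) X + w s * hsymmIcc w r s X := by
  induction r generalizing X with
  | zero =>
    simp only [hsymmIcc_succ, hsymmIcc_zero, ← add_sum_Ioc_eq_sum_Icc h,
      Icc_add_one_left_eq_Ioc]
    ring
  | succ r ih =>
    have hterm : ∀ j ∈ Ioc s X, w j * hsymmIcc w (r + 1) s j =
        w j * hsymmIcc w (r + 1) (s + 1) j + w s * (w j * hsymmIcc w r s j) := by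
      intro j hj
      rw [ih (mem_Ioc.1 hj).1.le]
      ring
    rw [hsymmIcc_succ _ (r + 1) s X, ← add_sum_Ioc_eq_sum_Icc h, sum_congr rfl hterm,
      sum_add_distrib, ← mul_sum, hsymmIcc_succ _ (r + 1) (s + 1) X, hsymmIcc_succ _ r s X,
      ← add_sum_Ioc_eq_sum_Icc h, hsymmIcc_succ _ r s s, Icc_self, sum_singleton,
      Icc_add_one_left_eq_Ioc]
    ring

theorem hsymmIcc_pos (hw : ∀ j, s ≤ j → 0 < w j) (h : s ≤ X) : 0 < hsymmIcc w r s X := by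
  induction r generalizing X with
  | zero => exact one_pos
  | succ r ih =>
    exact sum_pos (fun j hj => mul_pos (hw j (mem_Icc.1 hj).1) (ih (mem_Icc.1 hj).1))
      (nonempty_Icc.2 h)

theorem isGeomConv_hsymmIcc (h : s ≤ X + 1) :
    IsGeomConv (w (X + 1)) (hsymmIcc w · s X) (hsymmIcc w · s (X + 1)) :=
  ⟨rfl, fun _ => hsymmIcc_succ_top h⟩

theorem hsymmIcc_antitone_ratio (hw : ∀ j, s ≤ j → 0 < w j) (h : s ≤ X) :
    Antitone fun r => hsymmIcc w (r + 1) s X / hsymmIcc w r s X := by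
  induction X, h using Nat.le_induction with
  | base =>
    have hws : (fun r => hsymmIcc w (r + 1) s s / hsymmIcc w r s s) = fun _ => w s := by
      funext r
      rw [hsymmIcc_self, hsymmIcc_self, pow_succ, mul_div_cancel_left₀ _
        (pow_ne_zero _ (hw s le_rfl).ne')]
    rw [hws]
    exact antitone_const
  | succ X hX ih =>
    exact (isGeomConv_hsymmIcc (by omega)).antitone_ratio (fun r => hsymmIcc_pos hw hX) ih
      (hw _ (by omega)).le

theorem hsymmIcc_monotone_div (hw : ∀ j, s ≤ j → 0 < w j) (hX : s ≤ X) (hXY : X ≤ Y) :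
    Monotone fun r => hsymmIcc w r s Y / hsymmIcc w r s X := by
  induction Y, hXY using Nat.le_induction with
  | base =>
    have hone : (fun r => hsymmIcc w r s X / hsymmIcc w r s X) = fun _ => 1 :=
      funext fun r => div_self (hsymmIcc_pos hw hX).ne'
    rw [hone]
    exact monotone_const
  | succ Y hXY ih =>
    have hY : s ≤ Y := hX.trans hXY
    have hsplit : (fun r => hsymmIcc w r s (Y + 1) / hsymmIcc w r s X) =
        (fun r => hsymmIcc w r s (Y + 1) / hsymmIcc w r s Y) *
          fun r => hsymmIcc w r s Y / hsymmIcc w r s X :=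
      funext fun r => (div_mul_div_cancel₀ (hsymmIcc_pos hw hY).ne').symm
    rw [hsplit]
    exact Monotone.mul
      ((isGeomConv_hsymmIcc (by omega)).monotone_div (fun r => hsymmIcc_pos hw hY)
        (hsymmIcc_antitone_ratio hw hY) (hw _ (by omega)).le) ih
      (fun r => (div_pos (hsymmIcc_pos hw (by omega)) (hsymmIcc_pos hw hY)).le)
      (fun r => (div_pos (hsymmIcc_pos hw hY) (hsymmIcc_pos hw hX)).le)

theorem hsymmIcc_div_le_div (hw : ∀ j, s ≤ j → 0 < w j) (hir : i ≤ r) (hX : s ≤ X)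
    (hXY : X ≤ Y) :
    hsymmIcc w i s Y / hsymmIcc w r s Y ≤ hsymmIcc w i s X / hsymmIcc w r s X := by
  have h := hsymmIcc_monotone_div hw hX hXY hir
  have hpos {q Z} (hZ : s ≤ Z) := hsymmIcc_pos (r := q) hw hZ
  rw [div_le_div_iff₀ (hpos hX) (hpos hX)] at h
  rw [div_le_div_iff₀ (hpos (hX.trans hXY)) (hpos hX)]
  linarith

theorem hsymmIcc_le_of_le (hw : ∀ j, s ≤ j → 0 < w j) (hX : s ≤ X) (hXY : X ≤ Y) :
    hsymmIcc w r s X ≤ hsymmIcc w r s Y := by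
  have h := hsymmIcc_div_le_div hw (Nat.zero_le r) hX hXY
  simp only [hsymmIcc_zero] at h
  exact (one_div_le_one_div (hsymmIcc_pos hw (hX.trans hXY)) (hsymmIcc_pos hw hX)).1 h

theorem hsymmIcc_div_hsymmIcc_succ_le (hw : ∀ j, s ≤ j → 0 < w j) (hX : s + 1 ≤ X)
    (hXY : X ≤ Y) (hqr : q ≤ r) :
    hsymmIcc w q s Y / hsymmIcc w r (s + 1) Y ≤ hsymmIcc w q s X / hsymmIcc w r (s + 1) X := by
  have hw' : ∀ j, s + 1 ≤ j → 0 < w j := fun j hj => hw j (by omega)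
  induction q generalizing r with
  | zero => exact hsymmIcc_div_le_div hw' hqr hX hXY
  | succ q ih =>
    rw [hsymmIcc_succ_bot (by omega : s ≤ Y), hsymmIcc_succ_bot (by omega : s ≤ X), add_div,
      add_div, mul_div_assoc, mul_div_assoc]
    exact add_le_add (hsymmIcc_div_le_div hw' hqr hX hXY)
      (mul_le_mul_of_nonneg_left (ih (by omega)) (hw s le_rfl).le)

end hsymmIcc

theorem inv_natCast_pos_of_le {m : ℕ} (hm : 1 ≤ m) : ∀ j, m ≤ j → 0 < (j : ℝ)⁻¹ :=
  fun _ hj => inv_pos.2 (Nat.cast_pos.2 (by omega))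

theorem cesaro_iterate_single (r : ℕ) {m : ℕ} (hm : 1 ≤ m) (N : ℕ) :
    cesaro^[r + 1] (fun i => if i = m then (1 : ℝ) else 0) N =
      if m ≤ N then hsymmIcc (fun j => (j : ℝ)⁻¹) r m N / N else 0 := by
  induction r generalizing N with
  | zero =>
    rw [Function.iterate_one, cesaro, sum_ite_eq' (Icc 1 N) m (fun _ => (1 : ℝ))]
    by_cases h : m ≤ N <;> simp [hm, h]
  | succ r ih =>
    rw [Function.iterate_succ_apply', cesaro]
    have hsum : ∑ j ∈ Icc 1 N, cesaro^[r + 1] (fun i => if i = m then (1 : ℝ) else 0) j =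
        hsymmIcc (fun j => (j : ℝ)⁻¹) (r + 1) m N := by
      rw [sum_congr rfl fun j _ => ih j, ← sum_filter, hsymmIcc_succ]
      have hfil : (Icc 1 N).filter (m ≤ ·) = Icc m N := by
        ext x; simp only [mem_filter, mem_Icc]; omega
      exact hfil ▸ sum_congr rfl fun j _ => div_eq_inv_mul _ _
    rw [hsum]
    split_ifs with h
    · rfl
    · rw [hsymmIcc_succ_of_lt (by omega), zero_div]

section cesaroEntry

variable {k m N N' : ℕ}

theorem cesaroEntry_succ_of_le (hm : 1 ≤ m) (h : m ≤ N) :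
    cesaroEntry (k + 1) N m = hsymmIcc (fun j => (j : ℝ)⁻¹) k m N / N := by
  rw [cesaroEntry, cesaro_iterate_single k hm, if_pos h]

theorem cesaroEntry_succ_pos (hm : 1 ≤ m) (h : m ≤ N) : 0 < cesaroEntry (k + 1) N m := by
  rw [cesaroEntry_succ_of_le hm h]
  exact div_pos (hsymmIcc_pos (inv_natCast_pos_of_le hm) h) (Nat.cast_pos.2 (by omega))

theorem cesaroEntry_succ_div (hm : 1 ≤ m) (hN : m ≤ N) (hN' : m ≤ N') :
    cesaroEntry (k + 1) N m / cesaroEntry (k + 1) N' m =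
      hsymmIcc (fun j => (j : ℝ)⁻¹) k m N / hsymmIcc (fun j => (j : ℝ)⁻¹) k m N' *
        (N' / N) := by
  rw [cesaroEntry_succ_of_le hm hN, cesaroEntry_succ_of_le hm hN', div_div_div_eq,
    div_mul_div_comm, mul_comm (N : ℝ)]

theorem cesaroEntry_succ_div_le (hm : 1 ≤ m) (hN : m ≤ N) (hNN' : N ≤ N') :
    cesaroEntry (k + 1) N m / cesaroEntry (k + 1) N' m ≤ N' / N := by
  have hw := inv_natCast_pos_of_le hm
  rw [cesaroEntry_succ_div hm hN (hN.trans hNN')]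
  refine mul_le_of_le_one_left (by positivity) ?_
  exact div_le_one_of_le₀ (hsymmIcc_le_of_le hw hN hNN') (hsymmIcc_pos hw (hN.trans hNN')).le

theorem cesaroEntry_succ_div_succ_le (hm : 1 ≤ m) (hN : m + 1 ≤ N) (hNN' : N ≤ N') :
    cesaroEntry (k + 1) N (m + 1) / cesaroEntry (k + 1) N' (m + 1) ≤
      cesaroEntry (k + 1) N m / cesaroEntry (k + 1) N' m := by
  have hw := inv_natCast_pos_of_le hm
  have hpos {s Z} (hs : m ≤ s) (hZ : s ≤ Z) :=
    hsymmIcc_pos (r := k) (fun j hj => hw j (hs.trans hj)) hZ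
  rw [cesaroEntry_succ_div (by omega) hN (hN.trans hNN'),
    cesaroEntry_succ_div hm (by omega) (by omega)]
  refine mul_le_mul_of_nonneg_right ?_ (by positivity)
  have h := hsymmIcc_div_hsymmIcc_succ_le hw hN hNN' (le_refl k)
  rw [div_le_div_iff₀ (hpos (by omega) (by omega)) (hpos (by omega) hN)] at h
  rw [div_le_div_iff₀ (hpos (by omega) (by omega)) (hpos le_rfl (by omega))]
  linarith

end cesaroEntry

theorem cesaroEntry_ratio_decreasing_general (k n l L : ℕ) (hk : 1 ≤ k) (hl : 1 ≤ l)
    (hlL : l < L) (hLn : L ≤ n) :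
    (∀ τ : ℕ, 1 ≤ τ → τ + 1 ≤ l →
      cesaroEntry k (n + l) (n + (τ + 1)) / cesaroEntry k (n + L) (n + (τ + 1)) ≤
        cesaroEntry k (n + l) (n + τ) / cesaroEntry k (n + L) (n + τ)) ∧
    (cesaroEntry k (n + l) (n + 1) / cesaroEntry k (n + L) (n + 1) ≤ 2) ∧
    (∀ τ : ℕ, 1 ≤ τ → τ ≤ l →
      0 < cesaroEntry k (n + l) (n + τ) / cesaroEntry k (n + L) (n + τ)) := by
  obtain ⟨k, rfl⟩ : ∃ j, k = j + 1 := ⟨k - 1, by omega⟩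
  refine ⟨fun τ hτ hτl => ?_, ?_, fun τ hτ hτl => ?_⟩
  · rw [← add_assoc]
    exact cesaroEntry_succ_div_succ_le (by omega) (by omega) (by omega)
  · refine (cesaroEntry_succ_div_le (by omega) (by omega) (by omega)).trans ?_
    rw [div_le_iff₀ (Nat.cast_pos.2 (by omega))]
    push_cast
    linarith [(Nat.cast_le (α := ℝ)).2 hLn]
  · exact div_pos (cesaroEntry_succ_pos (by omega) (by omega))
      (cesaroEntry_succ_pos (by omega) (by omega))

/-- Let `k, n, λ, Λ ≥ 1` with `λ < Λ` and `Λ ≤ n`. For `τ = 1, …, λ` set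
`a_τ = T^k_{(n+λ, n+τ)} / T^k_{(n+Λ, n+τ)}`. Then `a_τ` is decreasing in `τ` and
`2 ≥ a_1 ≥ ⋯ ≥ a_λ > 0`. -/
theorem cesaroEntry_ratio_decreasing (k n l L : ℕ) (hk : 1 ≤ k) (hn : 1 ≤ n) (hl : 1 ≤ l)
    (hlL : l < L) (hLn : L ≤ n) :
    (∀ τ : ℕ, 1 ≤ τ → τ + 1 ≤ l →
      cesaroEntry k (n + l) (n + (τ + 1)) / cesaroEntry k (n + L) (n + (τ + 1)) ≤
        cesaroEntry k (n + l) (n + τ) / cesaroEntry k (n + L) (n + τ)) ∧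
    (cesaroEntry k (n + l) (n + 1) / cesaroEntry k (n + L) (n + 1) ≤ 2) ∧
    (∀ τ : ℕ, 1 ≤ τ → τ ≤ l →
      0 < cesaroEntry k (n + l) (n + τ) / cesaroEntry k (n + L) (n + τ)) :=
  cesaroEntry_ratio_decreasing_general k n l L hk hl hlL hLn
end

section
/- Let V be a real vector space, θ ∈ V^ℕ a sequence in V, and n, k, a ≥ 1 natural numbers. Then [T^k(θ)]_{n+a} is a convex combination of the vectors [T^k(θ)]_n, [T^{k−1}(θ)]_n, …, [T(θ)]_n, θ_{n+1}, …, θ_{n+a}; that is, there exist nonnegative real coefficients summing to 1 such that [T^k(θ)]_{n+a} equals the corresponding linear combination of these k + a vectors. -/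
/-!
One Cesàro step gives `T φ (m + 1) = m/(m+1) • T φ m + 1/(m+1) • φ (m + 1)`, a point of the
segment between `T φ m` and `φ (m + 1)`. Applied to `φ = T^(k-1) θ` this places `T^k θ (m + 1)`
between `T^k θ m` and `T^(k-1) θ (m + 1)`, so induction on `k` puts `T^k θ (m + 1)` in the convex
hull of `T^k θ m, …, T θ m, θ (m + 1)`, and induction on `a` then walks from `n` to `n + a`.
-/

/-- The Cesàro operator on sequences in a real vector space (indexed from 1; index 0 is
unused): `[T(θ)]_n = (θ_1 + ⋯ + θ_n)/n`. -/
noncomputable def cesaroV {V : Type*} [AddCommGroup V] [Module ℝ V] (θ : ℕ → V) : ℕ → V :=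
  fun n => (n : ℝ)⁻¹ • ∑ i ∈ Finset.Icc 1 n, θ i

open Finset

theorem exists_weights_of_mem_convexHull_image_union {R E ι κ : Type*} [Field R] [LinearOrder R]
    [IsStrictOrderedRing R] [AddCommGroup E] [Module R E]
    {s : Finset ι} {t : Finset κ} {p : ι → E} {q : κ → E} {x : E}
    (hx : x ∈ convexHull R (p '' s ∪ q '' t)) :
    ∃ c : ι → R, ∃ d : κ → R, (∀ i ∈ s, 0 ≤ c i) ∧ (∀ j ∈ t, 0 ≤ d j) ∧
      (∑ i ∈ s, c i) + (∑ j ∈ t, d j) = 1 ∧ x = (∑ i ∈ s, c i • p i) + ∑ j ∈ t, d j • q j := by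
  classical
  refine convexHull_min (t := {x | ∃ c : ι → R, ∃ d : κ → R, (∀ i ∈ s, 0 ≤ c i) ∧
    (∀ j ∈ t, 0 ≤ d j) ∧ (∑ i ∈ s, c i) + (∑ j ∈ t, d j) = 1 ∧
    x = (∑ i ∈ s, c i • p i) + ∑ j ∈ t, d j • q j}) ?_ ?_ hx
  · rintro _ (⟨i, hi : i ∈ s, rfl⟩ | ⟨j, hj : j ∈ t, rfl⟩)
    · refine ⟨Pi.single i 1, 0, fun i' _ => ?_, fun _ _ => le_rfl, ?_, ?_⟩
      · by_cases h : i' = i <;> simp [h]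
      · simp [Pi.single_apply, hi]
      · simp [Pi.single_apply, ite_smul, hi]
    · refine ⟨0, Pi.single j 1, fun _ _ => le_rfl, fun j' _ => ?_, ?_, ?_⟩
      · by_cases h : j' = j <;> simp [h]
      · simp [Pi.single_apply, hj]
      · simp [Pi.single_apply, ite_smul, hj]
  · rintro _ ⟨c, d, hc, hd, hsum, rfl⟩ _ ⟨c', d', hc', hd', hsum', rfl⟩ a b ha hb hab
    refine ⟨a • c + b • c', a • d + b • d', fun i hi => ?_, fun j hj => ?_, ?_, ?_⟩
    · simp only [Pi.add_apply, Pi.smul_apply, smul_eq_mul]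
      exact add_nonneg (mul_nonneg ha (hc i hi)) (mul_nonneg hb (hc' i hi))
    · simp only [Pi.add_apply, Pi.smul_apply, smul_eq_mul]
      exact add_nonneg (mul_nonneg ha (hd j hj)) (mul_nonneg hb (hd' j hj))
    · simp only [Pi.add_apply, Pi.smul_apply, smul_eq_mul, sum_add_distrib, ← mul_sum]
      linear_combination a * hsum + b * hsum' + hab
    · simp only [Pi.add_apply, Pi.smul_apply, smul_eq_mul, add_smul, mul_smul, sum_add_distrib,
        smul_sum, smul_add]
      abel

section Cesaro

variable {V : Type*} [AddCommGroup V] [Module ℝ V]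

theorem natCast_smul_cesaroV (φ : ℕ → V) (m : ℕ) :
    (m : ℝ) • cesaroV φ m = ∑ i ∈ Icc 1 m, φ i := by
  rcases m.eq_zero_or_pos with rfl | hm
  · simp
  · rw [cesaroV, smul_smul, mul_inv_cancel₀ (by positivity), one_smul]

theorem cesaroV_succ_mem_segment (φ : ℕ → V) (m : ℕ) :
    cesaroV φ (m + 1) ∈ segment ℝ (cesaroV φ m) (φ (m + 1)) := by
  have hm : (0 : ℝ) < m + 1 := by positivity
  refine ⟨m / (m + 1), 1 / (m + 1), by positivity, by positivity, by field_simp, ?_⟩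
  rw [div_eq_mul_inv, mul_comm, ← smul_smul, natCast_smul_cesaroV, one_div, ← smul_add,
    ← sum_Icc_succ_top (by omega), cesaroV]
  push_cast
  rfl

theorem cesaroV_iterate_succ_mem_convexHull (θ : ℕ → V) (m k : ℕ) :
    cesaroV^[k] θ (m + 1) ∈
      convexHull ℝ ((fun i => cesaroV^[i] θ m) '' (Icc 1 k : Set ℕ) ∪ {θ (m + 1)}) := by
  induction k with
  | zero => exact subset_convexHull ℝ _ (Or.inr rfl)
  | succ k ih =>
    have hleft : cesaroV^[k + 1] θ m ∈
        convexHull ℝ ((fun i => cesaroV^[i] θ m) '' (Icc 1 (k + 1) : Set ℕ) ∪ {θ (m + 1)}) :=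
      subset_convexHull ℝ _ (Or.inl ⟨k + 1, by simp, rfl⟩)
    have hright : cesaroV^[k] θ (m + 1) ∈
        convexHull ℝ ((fun i => cesaroV^[i] θ m) '' (Icc 1 (k + 1) : Set ℕ) ∪ {θ (m + 1)}) := by
      refine convexHull_mono (Set.union_subset_union_left _ (Set.image_mono ?_)) ih
      exact_mod_cast Icc_subset_Icc_right k.le_succ
    rw [Function.iterate_succ_apply'] at hleft ⊢
    exact (convex_convexHull ℝ _).segment_subset hleft hright (cesaroV_succ_mem_segment _ m)

theorem cesaroV_iterate_add_mem_convexHull (θ : ℕ → V) (n k a : ℕ) :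
    ∀ i ∈ Icc 1 k, cesaroV^[i] θ (n + a) ∈
      convexHull ℝ ((fun i => cesaroV^[i] θ n) '' (Icc 1 k : Set ℕ) ∪
        (fun j => θ (n + j)) '' (Icc 1 a : Set ℕ)) := by
  induction a with
  | zero => exact fun i hi => subset_convexHull ℝ _ (Or.inl ⟨i, hi, rfl⟩)
  | succ a ih =>
    intro i hi
    refine convexHull_min ?_ (convex_convexHull ℝ _) (cesaroV_iterate_succ_mem_convexHull θ _ i)
    rintro _ (⟨i', hi', rfl⟩ | rfl)
    · have hi'k : i' ∈ Icc 1 k := by simp only [coe_Icc, Set.mem_Icc, mem_Icc] at hi hi' ⊢; omega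
      refine convexHull_mono (Set.union_subset_union_right _ (Set.image_mono ?_)) (ih i' hi'k)
      exact_mod_cast Icc_subset_Icc_right a.le_succ
    · exact subset_convexHull ℝ _ (Or.inr ⟨a + 1, by simp, rfl⟩)

end Cesaro

theorem cesaroV_iterate_convex_combination_general {V : Type*} [AddCommGroup V] [Module ℝ V]
    (θ : ℕ → V) (n k a : ℕ) (hk : 1 ≤ k) :
    ∃ c d : ℕ → ℝ,
      (∀ i ∈ Finset.Icc 1 k, 0 ≤ c i) ∧ (∀ j ∈ Finset.Icc 1 a, 0 ≤ d j) ∧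
      ((∑ i ∈ Finset.Icc 1 k, c i) + (∑ j ∈ Finset.Icc 1 a, d j) = 1) ∧
      cesaroV^[k] θ (n + a) =
        (∑ i ∈ Finset.Icc 1 k, c i • cesaroV^[i] θ n) +
          ∑ j ∈ Finset.Icc 1 a, d j • θ (n + j) :=
  exists_weights_of_mem_convexHull_image_union
    (cesaroV_iterate_add_mem_convexHull θ n k a k (mem_Icc.2 ⟨hk, le_rfl⟩))

/-- For `n, k, a ≥ 1`, `[T^k(θ)]_{n+a}` is a convex combination of the vectors
`[T^k(θ)]_n, [T^{k−1}(θ)]_n, …, [T(θ)]_n, θ_{n+1}, …, θ_{n+a}`. -/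
theorem cesaroV_iterate_convex_combination {V : Type*} [AddCommGroup V] [Module ℝ V]
    (θ : ℕ → V) (n k a : ℕ) (hn : 1 ≤ n) (hk : 1 ≤ k) (ha : 1 ≤ a) :
    ∃ c d : ℕ → ℝ,
      (∀ i ∈ Finset.Icc 1 k, 0 ≤ c i) ∧ (∀ j ∈ Finset.Icc 1 a, 0 ≤ d j) ∧
      ((∑ i ∈ Finset.Icc 1 k, c i) + (∑ j ∈ Finset.Icc 1 a, d j) = 1) ∧
      cesaroV^[k] θ (n + a) =
        (∑ i ∈ Finset.Icc 1 k, c i • cesaroV^[i] θ n) +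
          ∑ j ∈ Finset.Icc 1 a, d j • θ (n + j) :=
  cesaroV_iterate_convex_combination_general θ n k a hk
end

section
/- Let W be a separable Fréchet space (a completely metrizable, separable, locally convex topological vector space over ℝ) and let B ⊆ W be a closed subset. Then the set Θ_{B,W} = { θ ∈ B^ℕ : for every k ≥ 1, the set { [T^k(θ)]_n : n ≥ 1 } is dense in the convex hull conv(B) } is a dense G_δ subset of B^ℕ, where B^ℕ carries the product topology. -/
open Filter Topology Finset Function TopologicalSpace

lemma Function.Periodic.sum_Ico_add {M : Type*} [AddCommMonoid M] {g : ℕ → M} {D : ℕ}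
    (hg : Periodic g D) (n : ℕ) : ∑ i ∈ Ico n (n + D), g i = ∑ r ∈ range D, g r := by
  calc ∑ i ∈ Ico n (n + D), g i = ∑ i ∈ Ico n (n + D), g (i % D) :=
        sum_congr rfl fun i _ => (hg.map_mod_nat i).symm
    _ = ∑ r ∈ range D, g r := by
        have h := congrArg (fun m => (m.map g).sum) (Nat.multiset_Ico_map_mod n D)
        simp only [Multiset.map_map] at h
        exact h

section Cesaro

variable {W : Type*} [AddCommGroup W] [Module ℝ W]

lemma cesaroV_sub_const (ψ : ℕ → W) (w : W) {n : ℕ} (hn : n ≠ 0) :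
    cesaroV (fun i => ψ i - w) n = cesaroV ψ n - w := by
  simp only [cesaroV, sum_sub_distrib, sum_const, Nat.card_Icc, add_tsub_cancel_right, smul_sub,
    ← Nat.cast_smul_eq_nsmul ℝ, smul_smul, inv_mul_cancel₀ (Nat.cast_ne_zero.2 hn : (n : ℝ) ≠ 0),
    one_smul]

lemma cesaroV_add (x y : ℕ → W) : cesaroV (x + y) = cesaroV x + cesaroV y := by
  ext n
  simp only [cesaroV, Pi.add_apply, sum_add_distrib, smul_add]

lemma Convex.cesaroV_mem {C : Set W} (hC : Convex ℝ C) {y : ℕ → W} (hy : ∀ i, y i ∈ C) {n : ℕ}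
    (hn : n ≠ 0) : cesaroV y n ∈ C := by
  rw [cesaroV, smul_sum]
  refine hC.sum_mem (fun _ _ => by positivity) ?_ fun i _ => hy i
  rw [sum_const, Nat.card_Icc, add_tsub_cancel_right, nsmul_eq_mul,
    mul_inv_cancel₀ (Nat.cast_ne_zero.2 hn)]

variable [TopologicalSpace W] [IsTopologicalAddGroup W]

lemma tendsto_cesaroV_iff {ψ : ℕ → W} {w : W} :
    Tendsto (cesaroV ψ) atTop (𝓝 w) ↔ Tendsto (cesaroV fun i => ψ i - w) atTop (𝓝 0) := by
  rw [← tendsto_sub_nhds_zero_iff]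
  refine tendsto_congr' ?_
  filter_upwards [eventually_ne_atTop 0] with n hn using (cesaroV_sub_const ψ w hn).symm

lemma tendsto_cesaroV_of_isVonNBounded {ψ : ℕ → W} {w : W}
    (h : Bornology.IsVonNBounded ℝ (Set.range fun n => ∑ i ∈ Icc 1 n, (ψ i - w))) :
    Tendsto (cesaroV ψ) atTop (𝓝 w) :=
  tendsto_cesaroV_iff.2 <| h.smul_tendsto_zero (.of_forall fun n => ⟨n, rfl⟩)
    (tendsto_inv_atTop_zero.comp tendsto_natCast_atTop_atTop)

/-- The partial sums of `ψ - w` are `D`-periodic from `N` on, hence take finitely many values. -/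
lemma tendsto_cesaroV_of_eventually_periodic [ContinuousSMul ℝ W] {ψ g : ℕ → W} {w : W}
    {D N : ℕ} (hD : 0 < D) (hg : Periodic g D) (hgw : ∑ r ∈ range D, g r = D • w)
    (hψ : ∀ i, N < i → ψ i = g i) :
    Tendsto (cesaroV ψ) atTop (𝓝 w) := by
  set S : ℕ → W := fun n => ∑ i ∈ Icc 1 n, (ψ i - w)
  have hS : Periodic (fun m => S (N + m)) D := by
    intro m
    have hwindow : ∑ i ∈ Ico (N + m + 1) (N + m + 1 + D), (ψ i - w) = 0 := by
      rw [sum_congr rfl fun i hi => by rw [hψ i (by have := (mem_Ico.1 hi).1; omega)],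
        sum_sub_distrib, hg.sum_Ico_add, hgw, sum_const, Nat.card_Ico, add_tsub_cancel_left, sub_self]
    show S (N + (m + D)) = S (N + m)
    rw [← add_assoc]
    simp only [S]
    rw [← Ico_add_one_right_eq_Icc, ← Ico_add_one_right_eq_Icc, add_right_comm,
      ← sum_Ico_consecutive _ (by omega : 1 ≤ N + m + 1) le_self_add,
      hwindow, add_zero]
  have hfin : (Set.range S).Finite := by
    refine ((Set.finite_Iio (N + D)).image S).subset ?_
    rintro _ ⟨n, rfl⟩
    rcases lt_or_ge n N with hn | hn
    · exact ⟨n, by simp only [Set.mem_Iio]; omega, rfl⟩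
    · have := Nat.mod_lt (n - N) hD
      refine ⟨N + (n - N) % D, by simp only [Set.mem_Iio]; omega, ?_⟩
      simpa only [Nat.add_sub_cancel' hn] using hS.map_mod_nat (n - N)
  exact tendsto_cesaroV_of_isVonNBounded hfin.isVonNBounded

/-- Split `y` into a finitely supported head, whose Cesàro means tend to `0`, and a tail with
values in a small convex neighbourhood `C` of `0`, whose Cesàro means stay in `C`. -/
lemma tendsto_cesaroV_zero [ContinuousSMul ℝ W] [LocallyConvexSpace ℝ W] {y : ℕ → W}
    (hy : Tendsto y atTop (𝓝 0)) : Tendsto (cesaroV y) atTop (𝓝 0) := by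
  rw [tendsto_def]
  intro V hV
  obtain ⟨V₀, hV₀, hV₀V⟩ := exists_nhds_zero_half hV
  obtain ⟨C, ⟨hC, hCconv⟩, hCV₀⟩ := (LocallyConvexSpace.convex_basis_zero ℝ W).mem_iff.1 hV₀
  obtain ⟨N, hN⟩ := eventually_atTop.1 (hy hC)
  set head : ℕ → W := fun i => if N ≤ i then 0 else y i
  set tail : ℕ → W := fun i => if N ≤ i then y i else 0
  have hhead : Tendsto (cesaroV head) atTop (𝓝 0) :=
    tendsto_cesaroV_of_eventually_periodic one_pos (g := 0) (fun _ => rfl) (by simp)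
      fun i hi => if_pos hi.le
  have htail : ∀ i, tail i ∈ C := fun i => by
    by_cases hi : N ≤ i
    · simpa only [tail, if_pos hi] using hN i hi
    · simpa only [tail, if_neg hi] using mem_of_mem_nhds hC
  have hsplit : y = head + tail := by
    ext i
    by_cases hi : N ≤ i <;> simp [head, tail, hi]
  filter_upwards [hhead hV₀, eventually_ne_atTop 0] with n hn hn0
  rw [Set.mem_preimage, hsplit, cesaroV_add]
  exact hV₀V _ hn _ (hCV₀ (hCconv.cesaroV_mem htail hn0))

lemma tendsto_cesaroV_of_tendsto [ContinuousSMul ℝ W] [LocallyConvexSpace ℝ W] {x : ℕ → W}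
    {w : W} (hx : Tendsto x atTop (𝓝 w)) : Tendsto (cesaroV x) atTop (𝓝 w) :=
  tendsto_cesaroV_iff.2 (tendsto_cesaroV_zero (tendsto_sub_nhds_zero_iff.2 hx))

lemma tendsto_cesaroV_iterate_of_tendsto [ContinuousSMul ℝ W] [LocallyConvexSpace ℝ W]
    {x : ℕ → W} {w : W} (hx : Tendsto x atTop (𝓝 w)) (k : ℕ) :
    Tendsto (cesaroV^[k] x) atTop (𝓝 w) := by
  induction k with
  | zero => exact hx
  | succ k ih => simpa only [iterate_succ_apply'] using tendsto_cesaroV_of_tendsto ih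

lemma continuous_cesaroV [ContinuousSMul ℝ W] : Continuous (cesaroV (V := W)) :=
  continuous_pi fun _ => (continuous_finsetSum _ fun i _ => continuous_apply i).const_smul _

end Cesaro

section Approximation

variable {W : Type*} [AddCommGroup W] [Module ℝ W] [TopologicalSpace W]

/-- The weights `⌊c i * D⌋₊ / ∑ j, ⌊c j * D⌋₊` tend to `c i` as `D → ∞`. -/
lemma exists_nat_weights_mem [IsTopologicalAddGroup W] [ContinuousSMul ℝ W] {ι : Type*}
    {t : Finset ι} {c : ι → ℝ} {z : ι → W} {U : Set W} (hU : IsOpen U)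
    (hc₀ : ∀ i ∈ t, 0 ≤ c i) (hc₁ : ∑ i ∈ t, c i = 1) (hcU : ∑ i ∈ t, c i • z i ∈ U) :
    ∃ a : ι → ℕ, 0 < ∑ i ∈ t, a i ∧
      ((∑ i ∈ t, a i : ℕ) : ℝ)⁻¹ • ∑ i ∈ t, (a i : ℝ) • z i ∈ U := by
  set a : ℕ → ι → ℕ := fun D i => ⌊c i * D⌋₊
  have hfloor : ∀ i ∈ t, Tendsto (fun D : ℕ => (a D i : ℝ) / D) atTop (𝓝 (c i)) := fun i hi =>
    (tendsto_nat_floor_mul_div_atTop (hc₀ i hi)).comp tendsto_natCast_atTop_atTop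
  have htotal : Tendsto (fun D : ℕ => ((∑ i ∈ t, a D i : ℕ) : ℝ) / D) atTop (𝓝 1) := by
    rw [← hc₁]
    simpa only [Nat.cast_sum, sum_div] using tendsto_finsetSum t hfloor
  have hweight : ∀ i ∈ t,
      Tendsto (fun D : ℕ => (a D i : ℝ) / (∑ j ∈ t, a D j : ℕ)) atTop (𝓝 (c i)) := by
    intro i hi
    refine (div_one (c i) ▸ (hfloor i hi).div htotal one_ne_zero).congr' ?_
    filter_upwards [eventually_ne_atTop 0] with D hD
    exact div_div_div_cancel_right₀ (Nat.cast_ne_zero.2 hD) _ _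
  have hmean : Tendsto (fun D : ℕ => ∑ i ∈ t, ((a D i : ℝ) / (∑ j ∈ t, a D j : ℕ)) • z i) atTop
      (𝓝 (∑ i ∈ t, c i • z i)) :=
    tendsto_finsetSum t fun i hi => (hweight i hi).smul_const (z i)
  have hpos : ∀ᶠ D in atTop, 0 < ∑ i ∈ t, a D i :=
    (htotal.eventually (eventually_gt_nhds one_pos)).mono fun D hD =>
      Nat.pos_of_ne_zero fun h => by simp [h] at hD
  obtain ⟨D, hD, hDU⟩ := (hpos.and (hmean.eventually (hU.mem_nhds hcU))).exists
  refine ⟨a D, hD, ?_⟩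
  rw [smul_sum]
  simp only [smul_smul, ← div_eq_inv_mul]
  exact hDU

lemma exists_periodic_average_mem [IsTopologicalAddGroup W] [ContinuousSMul ℝ W] {B U : Set W}
    (hU : IsOpen U) (hUB : (U ∩ convexHull ℝ B).Nonempty) :
    ∃ D, 0 < D ∧ ∃ g : ℕ → W, Periodic g D ∧ (∀ n, g n ∈ B) ∧
      (D : ℝ)⁻¹ • ∑ r ∈ range D, g r ∈ U := by
  obtain ⟨_, hwU, hwB⟩ := hUB
  rw [_root_.convexHull_eq] at hwB
  obtain ⟨ι, t, c, z, hc₀, hc₁, hzB, rfl⟩ := hwB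
  rw [centerMass_eq_of_sum_1 _ _ hc₁] at hwU
  obtain ⟨a, ha, haU⟩ := exists_nat_weights_mem hU hc₀ hc₁ hwU
  set l := (∑ i ∈ t, Multiset.replicate (a i) (z i)).toList
  have hlen : l.length = ∑ i ∈ t, a i := by
    simp [l]
  have hsum : l.sum = ∑ i ∈ t, (a i : ℝ) • z i := by
    simp [l, Multiset.sum_sum, Nat.cast_smul_eq_nsmul]
  have hmem : ∀ x ∈ l, x ∈ B := by
    simp only [l, Multiset.mem_toList, Multiset.mem_sum]
    rintro x ⟨i, hi, hx⟩
    exact Multiset.eq_of_mem_replicate hx ▸ hzB i hi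
  have hl : 0 < l.length := hlen ▸ ha
  refine ⟨l.length, hl, fun n => l[n % l.length]'(Nat.mod_lt n hl), fun n => by simp,
    fun n => hmem _ (List.getElem_mem _), ?_⟩
  have hblock : ∑ r ∈ range l.length, l[r % l.length]'(Nat.mod_lt r hl) = l.sum := by
    rw [sum_range fun r => l[r % l.length]'(Nat.mod_lt r hl), ← Fin.sum_univ_getElem]
    exact sum_congr rfl fun r _ => by simp only [Nat.mod_eq_of_lt r.2]
  rwa [hblock, hsum, hlen]

end Approximation

lemma TopologicalSpace.IsTopologicalBasis.subset_closure_iff {X : Type*} [TopologicalSpace X]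
    {S : Set (Set X)} (hS : IsTopologicalBasis S) {A s : Set X} :
    A ⊆ closure s ↔ ∀ U ∈ S, (U ∩ A).Nonempty → (U ∩ s).Nonempty := by
  refine ⟨fun h U hU ⟨a, haU, haA⟩ => hS.mem_closure_iff.1 (h haA) U hU haU, fun h a ha => ?_⟩
  exact hS.mem_closure_iff.2 fun U hU haU => h U hU ⟨a, haU, ha⟩

lemma dense_of_forall_exists_eqOn_lt {X : Type*} [TopologicalSpace X] {s : Set (ℕ → X)}
    (h : ∀ (θ : ℕ → X) (N : ℕ), ∃ θ' ∈ s, ∀ i < N, θ' i = θ i) : Dense s := by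
  intro θ
  choose θ' hθ's hθ' using h θ
  refine mem_closure_of_tendsto (b := atTop) (tendsto_pi_nhds.2 fun i => ?_) (.of_forall hθ's)
  exact tendsto_atTop_of_eventually_const (i₀ := i + 1) fun N hN => hθ' N i hN

section Generic

variable {W : Type*} [AddCommGroup W] [Module ℝ W] [TopologicalSpace W]

def cesaroVisits (B : Set W) (k : ℕ) (U : Set W) : Set (ℕ → B) :=
  {θ | ∃ n, 1 ≤ n ∧ cesaroV^[k] (fun i => (θ i : W)) n ∈ U}

lemma subset_closure_cesaroV_iff {S : Set (Set W)} (hS : IsTopologicalBasis S) (B : Set W)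
    (k : ℕ) (θ : ℕ → B) :
    convexHull ℝ B ⊆ closure {x | ∃ n, 1 ≤ n ∧ x = cesaroV^[k] (fun i => (θ i : W)) n} ↔
      ∀ U ∈ S, (U ∩ convexHull ℝ B).Nonempty → θ ∈ cesaroVisits B k U := by
  rw [hS.subset_closure_iff]
  refine forall₂_congr fun U _ => imp_congr_right fun _ => ?_
  exact ⟨fun ⟨_, hxU, n, hn, hx⟩ => ⟨n, hn, hx ▸ hxU⟩, fun ⟨n, hn, hnU⟩ => ⟨_, hnU, n, hn, rfl⟩⟩

variable [IsTopologicalAddGroup W] [ContinuousSMul ℝ W]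

lemma isOpen_cesaroVisits (B : Set W) (k : ℕ) {U : Set W} (hU : IsOpen U) :
    IsOpen (cesaroVisits B k U) := by
  have hcont : ∀ n, Continuous fun θ : ℕ → B => cesaroV^[k] (fun i => (θ i : W)) n := fun n =>
    (continuous_apply n).comp <| (continuous_cesaroV.iterate k).comp <|
      continuous_pi fun i => continuous_subtype_val.comp (continuous_apply i)
  have : cesaroVisits B k U = ⋃ n ∈ Set.Ici 1,
      (fun θ : ℕ → B => cesaroV^[k] (fun i => (θ i : W)) n) ⁻¹' U := by
    ext θ
    simp [cesaroVisits]
  rw [this]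
  exact isOpen_biUnion fun n _ => hU.preimage (hcont n)

lemma exists_eqOn_lt_mem_cesaroVisits [LocallyConvexSpace ℝ W] {B U : Set W} {k : ℕ}
    (hk : 1 ≤ k) (hU : IsOpen U) (hUB : (U ∩ convexHull ℝ B).Nonempty) (θ : ℕ → B) (N : ℕ) :
    ∃ θ' ∈ cesaroVisits B k U, ∀ i < N, θ' i = θ i := by
  obtain ⟨D, hD, g, hg, hgB, hgU⟩ := exists_periodic_average_mem hU hUB
  set θ' : ℕ → B := fun i => if i < N then θ i else ⟨g i, hgB i⟩
  have hmean : Tendsto (cesaroV fun i => (θ' i : W)) atTop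
      (𝓝 ((D : ℝ)⁻¹ • ∑ r ∈ range D, g r)) := by
    refine tendsto_cesaroV_of_eventually_periodic (N := N) hD hg ?_ fun i hi => by
      simp [θ', not_lt.2 hi.le]
    rw [← Nat.cast_smul_eq_nsmul ℝ, smul_inv_smul₀ (Nat.cast_ne_zero.2 hD.ne')]
  obtain ⟨k, rfl⟩ := Nat.exists_eq_add_of_le' hk
  obtain ⟨n, hn, hnU⟩ := ((eventually_ge_atTop 1).and
    ((tendsto_cesaroV_iterate_of_tendsto hmean k).eventually (hU.mem_nhds hgU))).exists
  exact ⟨θ', ⟨n, hn, by rwa [iterate_succ_apply]⟩, fun i hi => if_pos hi⟩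

lemma dense_cesaroVisits [LocallyConvexSpace ℝ W] {B U : Set W} {k : ℕ} (hk : 1 ≤ k)
    (hU : IsOpen U) (hUB : (U ∩ convexHull ℝ B).Nonempty) : Dense (cesaroVisits B k U) :=
  dense_of_forall_exists_eqOn_lt (exists_eqOn_lt_mem_cesaroVisits hk hU hUB)

end Generic

/-- Theorem 3.2: if `W` is a separable Fréchet space (completely metrizable and separable,
i.e. Polish, locally convex topological vector space over `ℝ`) and `B ⊆ W` is closed, then
the set of sequences `θ ∈ B^ℕ` such that, for every `k ≥ 1`, `([T^k(θ)]_n)_{n≥1}` is dense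
in `conv(B)`, is a dense `G_δ` subset of `B^ℕ` with the product topology. -/
theorem cesaro_generic_dense_closed (W : Type*) [AddCommGroup W] [Module ℝ W]
    [TopologicalSpace W] [IsTopologicalAddGroup W] [ContinuousSMul ℝ W]
    [LocallyConvexSpace ℝ W] [PolishSpace W]
    (B : Set W) (hB : IsClosed B) :
    Dense {θ : ℕ → B | ∀ k, 1 ≤ k →
        convexHull ℝ B ⊆
          closure {x : W | ∃ n, 1 ≤ n ∧ x = cesaroV^[k] (fun i => (θ i : W)) n}} ∧
    IsGδ {θ : ℕ → B | ∀ k, 1 ≤ k →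
        convexHull ℝ B ⊆
          closure {x : W | ∃ n, 1 ≤ n ∧ x = cesaroV^[k] (fun i => (θ i : W)) n}} := by
  have : PolishSpace B := hB.polishSpace
  obtain ⟨S, hSc, -, hS⟩ := exists_countable_basis W
  set T := Set.Ici 1 ×ˢ {U ∈ S | (U ∩ convexHull ℝ B).Nonempty}
  have hT : T.Countable := (Set.to_countable _).prod (hSc.mono (Set.sep_subset _ _))
  have hopen : ∀ p ∈ T, IsOpen (cesaroVisits B p.1 p.2) := fun p hp =>
    isOpen_cesaroVisits B p.1 (hS.isOpen hp.2.1)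
  have hdense : ∀ p ∈ T, Dense (cesaroVisits B p.1 p.2) := fun p hp =>
    dense_cesaroVisits hp.1 (hS.isOpen hp.2.1) hp.2.2
  have hΘ : {θ : ℕ → B | ∀ k, 1 ≤ k → convexHull ℝ B ⊆
      closure {x : W | ∃ n, 1 ≤ n ∧ x = cesaroV^[k] (fun i => (θ i : W)) n}} =
      ⋂ p ∈ T, cesaroVisits B p.1 p.2 := by
    ext θ
    simp only [Set.mem_ofPred_eq, subset_closure_cesaroV_iff hS, Set.mem_iInter, T, Set.mem_prod,
      Set.mem_Ici, Prod.forall, and_imp]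
    exact ⟨fun h k U hk hU => h k hk U hU, fun h k hk U hU => h k U hk hU⟩
  rw [hΘ]
  exact ⟨dense_biInter_of_isOpen hopen hT hdense, .biInter hT fun p hp => (hopen p hp).isGδ⟩
end

section
/- Let W be a separable, metrizable, locally convex topological vector space over ℝ and let A ⊆ W be an arbitrary subset. Let θ_1, …, θ_ρ ∈ A be ρ given terms (possibly ρ = 0), let x ∈ conv(A), let U be a neighborhood of x in W, and let k ≥ 1. Then there exist a natural number n > ρ and terms θ_{ρ+1}, …, θ_n ∈ A such that every sequence θ' ∈ A^ℕ with θ'_i = θ_i for i = 1, …, n satisfies [T^k(θ')]_n ∈ U. -/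
open Filter Finset Topology

section Algebraic

variable {E : Type*} [AddCommGroup E] [Module ℝ E]

theorem cesaroV_eq_smul_sum_range (θ : ℕ → E) (n : ℕ) :
    cesaroV θ n = (n⁻¹ : ℝ) • ∑ i ∈ range n, θ (i + 1) := by
  rw [cesaroV, range_eq_Ico, sum_Ico_add', zero_add, Ico_add_one_right_eq_Icc]

theorem eqOn_cesaroV {θ η : ℕ → E} {n : ℕ} (h : Set.EqOn θ η (Set.Icc 1 n)) :
    Set.EqOn (cesaroV θ) (cesaroV η) (Set.Icc 1 n) := fun m hm => by
  refine congrArg _ (sum_congr rfl fun i hi => h ?_)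
  rw [Finset.mem_Icc] at hi
  exact ⟨hi.1, hi.2.trans hm.2⟩

theorem eqOn_cesaroV_iterate {θ η : ℕ → E} {n : ℕ} (h : Set.EqOn θ η (Set.Icc 1 n))
    (k : ℕ) : Set.EqOn (cesaroV^[k] θ) (cesaroV^[k] η) (Set.Icc 1 n) := by
  induction k with
  | zero => exact h
  | succ k ih => simpa only [Function.iterate_succ_apply'] using eqOn_cesaroV ih

end Algebraic

section ContinuousOperations

variable {E : Type*} [AddCommGroup E] [Module ℝ E] [TopologicalSpace E]
  [ContinuousAdd E] [ContinuousSMul ℝ E]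

theorem Finset.tendsto_centerMass {ι α : Type*} {t : Finset ι} {l : Filter α} {w : α → ι → ℝ}
    {w₀ : ι → ℝ} (hw : ∀ i ∈ t, Tendsto (w · i) l (𝓝 (w₀ i))) (h₀ : ∑ i ∈ t, w₀ i ≠ 0)
    (z : ι → E) : Tendsto (fun a => t.centerMass (w a) z) l (𝓝 (t.centerMass w₀ z)) :=
  ((tendsto_finsetSum t hw).inv₀ h₀).smul
    (tendsto_finsetSum t fun i hi => (hw i hi).smul_const (z i))

theorem Finset.exists_natCast_centerMass_mem {ι : Type*} {t : Finset ι} {w : ι → ℝ}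
    (hw₀ : ∀ i ∈ t, 0 ≤ w i) (hw₁ : ∑ i ∈ t, w i = 1) (z : ι → E) {U : Set E}
    (hU : U ∈ 𝓝 (t.centerMass w z)) :
    ∃ p : ι → ℕ, 0 < ∑ i ∈ t, p i ∧ t.centerMass (fun i => (p i : ℝ)) z ∈ U := by
  have hfloor : ∀ i ∈ t, Tendsto (fun N : ℝ => (⌊w i * N⌋₊ : ℝ) / N) atTop (𝓝 (w i)) :=
    fun i hi => tendsto_nat_floor_mul_div_atTop (hw₀ i hi)
  have hmass := (tendsto_finsetSum t hfloor).eventually (lt_mem_nhds (hw₁ ▸ one_pos))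
  have hmem := (tendsto_centerMass hfloor (hw₁ ▸ one_ne_zero) z).eventually hU
  obtain ⟨N, hpos, hN, hNU⟩ := (hmass.and (eventually_gt_atTop 0 |>.and hmem)).exists
  refine ⟨fun i => ⌊w i * N⌋₊, ?_, ?_⟩
  · rw [← sum_div, div_pos_iff_of_pos_right hN] at hpos
    exact_mod_cast hpos
  · have hscale : (fun i => (⌊w i * N⌋₊ : ℝ) / N) = N⁻¹ • fun i => (⌊w i * N⌋₊ : ℝ) := by
      ext i
      simp [div_eq_inv_mul]
    rwa [hscale, centerMass_smul_left t z (inv_ne_zero hN.ne')] at hNU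

theorem exists_list_average_mem_of_mem_convexHull {A : Set E} {x : E}
    (hx : x ∈ convexHull ℝ A) {U : Set E} (hU : U ∈ 𝓝 x) :
    ∃ L : List E, L ≠ [] ∧ (∀ a ∈ L, a ∈ A) ∧ (L.length⁻¹ : ℝ) • L.sum ∈ U := by
  rw [_root_.convexHull_eq] at hx
  obtain ⟨ι, t, w, z, hw₀, hw₁, hzA, rfl⟩ := hx
  obtain ⟨p, hp, hpU⟩ := t.exists_natCast_centerMass_mem hw₀ hw₁ z hU
  let L := t.toList.flatMap fun i => List.replicate (p i) (z i)
  have hlength : L.length = ∑ i ∈ t, p i := by simp [L, List.length_flatMap]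
  have hsum : L.sum = ∑ i ∈ t, p i • z i := by
    simp [L, List.flatMap, List.sum_flatten, Function.comp_def]
  refine ⟨L, List.ne_nil_of_length_pos (hlength ▸ hp), ?_, ?_⟩
  · simp only [L, List.mem_flatMap, Finset.mem_toList, List.mem_replicate]
    rintro a ⟨i, hi, -, rfl⟩
    exact hzA i hi
  · simpa [hlength, hsum, Finset.centerMass, Nat.cast_smul_eq_nsmul] using hpU

theorem tendsto_cesaro_smul_congr {u v : ℕ → E} {y : E} (huv : u =ᶠ[atTop] v)
    (hu : Tendsto (fun n : ℕ => (n⁻¹ : ℝ) • ∑ i ∈ range n, u i) atTop (𝓝 y)) :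
    Tendsto (fun n : ℕ => (n⁻¹ : ℝ) • ∑ i ∈ range n, v i) atTop (𝓝 y) := by
  obtain ⟨N, hN⟩ := eventually_atTop.mp huv
  have hsum : ∀ n ≥ N,
      ∑ i ∈ range n, v i = ∑ i ∈ range n, u i + ∑ i ∈ range N, (v i - u i) := by
    intro n hn
    have htail : ∑ i ∈ Ico N n, (v i - u i) = 0 :=
      sum_eq_zero fun i hi => by rw [hN i (mem_Ico.mp hi).1, sub_self]
    have hdiff : ∑ i ∈ range n, (v i - u i) = ∑ i ∈ range N, (v i - u i) := by
      rw [← sum_range_add_sum_Ico _ hn, htail, add_zero]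
    rw [← hdiff, sum_sub_distrib, add_sub_cancel]
  have hC := (tendsto_inv_atTop_nhds_zero_nat (𝕜 := ℝ)).smul_const (∑ i ∈ range N, (v i - u i))
  rw [zero_smul] at hC
  simpa using (hu.add hC).congr' <| (eventually_ge_atTop N).mono fun n hn => by
    rw [hsum n hn, smul_add]

theorem Function.Periodic.tendsto_cesaro_smul {u : ℕ → E} {q : ℕ} (hu : Function.Periodic u q)
    (hq : 0 < q) :
    Tendsto (fun n : ℕ => (n⁻¹ : ℝ) • ∑ i ∈ range n, u i) atTop
      (𝓝 ((q⁻¹ : ℝ) • ∑ i ∈ range q, u i)) := by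
  set S := ∑ i ∈ range q, u i
  -- the error term, periodic and hence von Neumann bounded
  set v : ℕ → E := fun n => ∑ i ∈ range n, u i - ((n : ℝ) / q) • S
  have hv : Function.Periodic v q := by
    intro n
    have hsum : ∑ i ∈ range (n + q), u i = ∑ i ∈ range n, u i + S := by
      rw [add_comm n q, sum_range_add, add_comm]
      exact congrArg (· + S) (sum_congr rfl fun i _ => by rw [add_comm, hu])
    have hq' : (q : ℝ) ≠ 0 := by positivity
    simp only [v, hsum, Nat.cast_add, add_div, div_self hq', add_smul, one_smul]
    abel
  have hbdd : Bornology.IsVonNBounded ℝ (Set.range v) := by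
    refine ((Set.finite_Iio q).image v).isVonNBounded.subset ?_
    rintro _ ⟨n, rfl⟩
    exact ⟨n % q, Nat.mod_lt n hq, hv.map_mod_nat n⟩
  have hlim := hbdd.smul_tendsto_zero (Eventually.of_forall Set.mem_range_self)
    (tendsto_inv_atTop_nhds_zero_nat (𝕜 := ℝ))
  refine (zero_add ((q⁻¹ : ℝ) • S) ▸ hlim.add_const ((q⁻¹ : ℝ) • S)).congr' ?_
  filter_upwards [eventually_gt_atTop 0] with n hn
  have hn' : (n : ℝ) ≠ 0 := by positivity
  simp only [v, Pi.smul_apply', smul_sub, smul_smul, div_eq_mul_inv, inv_mul_cancel_left₀ hn',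
    sub_add_cancel]

theorem tendsto_cesaroV_of_eventually_cycle {L : List E} (hL : 0 < L.length) {η : ℕ → E}
    (hη : ∀ᶠ i in atTop, η (i + 1) = L[i % L.length]'(Nat.mod_lt i hL)) :
    Tendsto (cesaroV η) atTop (𝓝 ((L.length⁻¹ : ℝ) • L.sum)) := by
  have hper : Function.Periodic (fun i => L[i % L.length]'(Nat.mod_lt i hL)) L.length :=
    fun i => by simp only [Nat.add_mod_right]
  have hblock : ∑ i ∈ range L.length, L[i % L.length]'(Nat.mod_lt i hL) = L.sum := by
    rw [sum_range]
    simp only [Nat.mod_eq_of_lt (Fin.is_lt _), Fin.sum_univ_getElem]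
  simp_rw [funext (cesaroV_eq_smul_sum_range η)]
  exact tendsto_cesaro_smul_congr (hη.mono fun _ h => h.symm)
    (hblock ▸ hper.tendsto_cesaro_smul hL)

end ContinuousOperations

section LocallyConvex

variable {E : Type*} [AddCommGroup E] [Module ℝ E] [TopologicalSpace E]
  [IsTopologicalAddGroup E] [ContinuousSMul ℝ E] [LocallyConvexSpace ℝ E]

theorem Filter.Tendsto.cesaro_smul_of_locallyConvexSpace {u : ℕ → E} {l : E}
    (h : Tendsto u atTop (𝓝 l)) :
    Tendsto (fun n : ℕ => (n⁻¹ : ℝ) • ∑ i ∈ range n, u i) atTop (𝓝 l) := by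
  have hp := with_gaugeSeminormFamily (𝕜 := ℝ) (E := E)
  rw [hp.tendsto_nhds]
  intro s ε hε
  set p := gaugeSeminormFamily ℝ E s
  have hpu : Tendsto (fun i => p (u i - l)) atTop (𝓝 0) :=
    ((hp.continuous_seminorm s).tendsto' 0 0 (map_zero p)).comp
      (tendsto_sub_nhds_zero_iff.2 h)
  filter_upwards [hpu.cesaro.eventually (gt_mem_nhds hε), eventually_gt_atTop 0] with n hn hn0
  have hn' : (n : ℝ) ≠ 0 := by positivity
  have hcenter : (n⁻¹ : ℝ) • ∑ i ∈ range n, u i - l = (n⁻¹ : ℝ) • ∑ i ∈ range n, (u i - l) := by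
    rw [sum_sub_distrib, sum_const, card_range, smul_sub, ← Nat.cast_smul_eq_nsmul ℝ, smul_smul,
      inv_mul_cancel₀ hn', one_smul]
  calc p ((n⁻¹ : ℝ) • ∑ i ∈ range n, u i - l) = (n : ℝ)⁻¹ * p (∑ i ∈ range n, (u i - l)) := by
        rw [hcenter, map_smul_eq_mul, norm_inv, RCLike.norm_natCast]
    _ ≤ (n : ℝ)⁻¹ * ∑ i ∈ range n, p (u i - l) := by
        gcongr
        exact le_sum_of_subadditive p (map_zero p).le (map_add_le_add p) _ _
    _ < ε := hn

theorem tendsto_cesaroV {θ : ℕ → E} {l : E} (h : Tendsto θ atTop (𝓝 l)) :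
    Tendsto (cesaroV θ) atTop (𝓝 l) := by
  simp_rw [funext (cesaroV_eq_smul_sum_range θ)]
  exact ((tendsto_add_atTop_iff_nat 1).2 h).cesaro_smul_of_locallyConvexSpace

theorem tendsto_cesaroV_iterate {θ : ℕ → E} {l : E} (h : Tendsto θ atTop (𝓝 l)) (k : ℕ) :
    Tendsto (cesaroV^[k] θ) atTop (𝓝 l) := by
  induction k with
  | zero => exact h
  | succ k ih => simpa only [Function.iterate_succ_apply'] using tendsto_cesaroV ih

end LocallyConvex

theorem cesaro_finite_approximation_general (W : Type*) [AddCommGroup W] [Module ℝ W]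
    [TopologicalSpace W] [IsTopologicalAddGroup W] [ContinuousSMul ℝ W]
    [LocallyConvexSpace ℝ W]
    (A : Set W) (ρ : ℕ) (θ : ℕ → W) (hθ : ∀ i, 1 ≤ i → i ≤ ρ → θ i ∈ A)
    (x : W) (hx : x ∈ convexHull ℝ A) (U : Set W) (hU : U ∈ nhds x)
    (k : ℕ) (hk : 1 ≤ k) :
    ∃ n, ρ < n ∧ ∃ η : ℕ → W,
      (∀ i, 1 ≤ i → i ≤ n → η i ∈ A) ∧
      (∀ i, 1 ≤ i → i ≤ ρ → η i = θ i) ∧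
      ∀ θ' : ℕ → W, (∀ i, 1 ≤ i → θ' i ∈ A) → (∀ i, 1 ≤ i → i ≤ n → θ' i = η i) →
        cesaroV^[k] θ' n ∈ U := by
  obtain ⟨L, hL, hLA, hLU⟩ :=
    exists_list_average_mem_of_mem_convexHull hx (interior_mem_nhds.2 hU)
  have hq : 0 < L.length := List.length_pos_iff.2 hL
  let η : ℕ → W := fun i => if i ≤ ρ then θ i else L[(i - 1) % L.length]'(Nat.mod_lt _ hq)
  have hηA : ∀ i, 1 ≤ i → η i ∈ A := fun i hi => by
    by_cases h : i ≤ ρ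
    · simpa only [η, if_pos h] using hθ i hi h
    · simpa only [η, if_neg h] using hLA _ (List.getElem_mem _)
  have hcycle : ∀ᶠ i in atTop, η (i + 1) = L[i % L.length]'(Nat.mod_lt i hq) :=
    (eventually_ge_atTop ρ).mono fun i hi => by simp [η, show ¬ i + 1 ≤ ρ by omega]
  have hlim : Tendsto (cesaroV^[k] η) atTop (𝓝 ((L.length⁻¹ : ℝ) • L.sum)) := by
    obtain ⟨k, rfl⟩ := Nat.exists_eq_add_of_le' hk
    rw [Function.iterate_succ_apply]
    exact tendsto_cesaroV_iterate (tendsto_cesaroV_of_eventually_cycle hq hcycle) k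
  obtain ⟨n, hnU, hn⟩ :=
    ((hlim.eventually (isOpen_interior.mem_nhds hLU)).and (eventually_gt_atTop ρ)).exists
  refine ⟨n, hn, η, fun i hi _ => hηA i hi, fun i _ hi => if_pos hi, fun θ' _ hθ' => ?_⟩
  rw [eqOn_cesaroV_iterate (fun i hi => hθ' i hi.1 hi.2) k ⟨by omega, le_rfl⟩]
  exact interior_subset hnU

/-- Lemma 3.3: given finitely many terms `θ_1, …, θ_ρ ∈ A`, a target `x ∈ conv(A)`, a
neighborhood `U` of `x` and `k ≥ 1`, there exist `n > ρ` and terms `θ_{ρ+1}, …, θ_n ∈ A`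
such that every sequence `θ' ∈ A^ℕ` starting with `θ_1, …, θ_n` satisfies
`[T^k(θ')]_n ∈ U`. -/
theorem cesaro_finite_approximation (W : Type*) [AddCommGroup W] [Module ℝ W]
    [TopologicalSpace W] [IsTopologicalAddGroup W] [ContinuousSMul ℝ W]
    [LocallyConvexSpace ℝ W] [TopologicalSpace.MetrizableSpace W]
    [TopologicalSpace.SeparableSpace W]
    (A : Set W) (ρ : ℕ) (θ : ℕ → W) (hθ : ∀ i, 1 ≤ i → i ≤ ρ → θ i ∈ A)
    (x : W) (hx : x ∈ convexHull ℝ A) (U : Set W) (hU : U ∈ nhds x)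
    (k : ℕ) (hk : 1 ≤ k) :
    ∃ n, ρ < n ∧ ∃ η : ℕ → W,
      (∀ i, 1 ≤ i → i ≤ n → η i ∈ A) ∧
      (∀ i, 1 ≤ i → i ≤ ρ → η i = θ i) ∧
      ∀ θ' : ℕ → W, (∀ i, 1 ≤ i → θ' i ∈ A) → (∀ i, 1 ≤ i → i ≤ n → θ' i = η i) →
        cesaroV^[k] θ' n ∈ U :=
  cesaro_finite_approximation_general W A ρ θ hθ x hx U hU k hk
end

section
/- Let A ⊆ [0,1]. Then there is no sequence a ∈ A^ℕ together with a sequence of indices (λ_n)_{n≥1} of natural numbers such that [T(a)]_{λ_n} → 0 and [T²(a)]_{λ_n} → 1 as n → ∞; in particular, simultaneous approximation of arbitrary targets by the iterates of the Cesàro operator is impossible when all terms of the sequence lie in [0,1]. -/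
/-!
For a sequence with terms in `[0,1]` and partial sums `S_k`, we have `S_k ≤ min(k, S_n)
≤ √(k S_n)` for `k ≤ n`, so `T(a)_k ≤ √(S_n / k)`. Averaging over `k ≤ n` and using
`∑_{k ≤ n} k^{-1/2} ≤ 2√n` gives `T²(a)_n ≤ 2 √(T(a)_n)`. Hence `T(a)_{λ_n} → 0` forces
`T²(a)_{λ_n} → 0`, which is incompatible with `T²(a)_{λ_n} → 1`.
-/

open Finset Filter Topology

lemma one_div_sqrt_add_one_le {x : ℝ} (hx : 0 ≤ x) :
    1 / √(x + 1) ≤ 2 * (√(x + 1) - √x) := by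
  have hpos : 0 < √(x + 1) := Real.sqrt_pos.2 (by linarith)
  rw [div_le_iff₀ hpos]
  nlinarith [Real.sq_sqrt hx, Real.sq_sqrt (by linarith : 0 ≤ x + 1),
    sq_nonneg (√(x + 1) - √x)]

lemma sum_Icc_one_div_sqrt_le (n : ℕ) : ∑ k ∈ Icc 1 n, 1 / √k ≤ 2 * √n := by
  induction n with
  | zero => simp
  | succ n ih =>
    rw [sum_Icc_succ_top (Nat.le_add_left 1 n), Nat.cast_succ]
    linarith [one_div_sqrt_add_one_le n.cast_nonneg]

lemma cesaro_le_sqrt_sum_div_sqrt {a : ℕ → ℝ} (ha : ∀ i, 1 ≤ i → a i ∈ Set.Icc (0 : ℝ) 1)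
    {k n : ℕ} (hkn : k ≤ n) :
    cesaro a k ≤ √(∑ i ∈ Icc 1 n, a i) / √k := by
  have nonneg : ∀ m, 0 ≤ ∑ i ∈ Icc 1 m, a i := fun m =>
    sum_nonneg fun i hi => (ha i (mem_Icc.1 hi).1).1
  have le_count : ∑ i ∈ Icc 1 k, a i ≤ k := by
    calc ∑ i ∈ Icc 1 k, a i ≤ ∑ _i ∈ Icc 1 k, (1 : ℝ) :=
          sum_le_sum fun i hi => (ha i (mem_Icc.1 hi).1).2
      _ = k := by simp
  have le_full_sum : ∑ i ∈ Icc 1 k, a i ≤ ∑ i ∈ Icc 1 n, a i :=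
    sum_le_sum_of_subset_of_nonneg (Icc_subset_Icc_right hkn)
      fun i hi _ => (ha i (mem_Icc.1 hi).1).1
  have le_sqrt : ∑ i ∈ Icc 1 k, a i ≤ √((∑ i ∈ Icc 1 n, a i) * k) := by
    rw [Real.le_sqrt (nonneg k) (mul_nonneg (nonneg n) k.cast_nonneg)]
    nlinarith [nonneg k]
  calc cesaro a k ≤ √((∑ i ∈ Icc 1 n, a i) * k) / k :=
        div_le_div_of_nonneg_right le_sqrt k.cast_nonneg
    _ = √(∑ i ∈ Icc 1 n, a i) / √k := by
        rw [Real.sqrt_mul (nonneg n), mul_div_assoc, Real.sqrt_div_self', mul_one_div]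

theorem cesaro_cesaro_le_two_mul_sqrt_cesaro {a : ℕ → ℝ}
    (ha : ∀ i, 1 ≤ i → a i ∈ Set.Icc (0 : ℝ) 1) (n : ℕ) :
    cesaro (cesaro a) n ≤ 2 * √(cesaro a n) := by
  have sum_le : ∑ k ∈ Icc 1 n, cesaro a k ≤ √(∑ i ∈ Icc 1 n, a i) * (2 * √n) :=
    calc ∑ k ∈ Icc 1 n, cesaro a k ≤ ∑ k ∈ Icc 1 n, √(∑ i ∈ Icc 1 n, a i) * (1 / √k) :=
          sum_le_sum fun k hk => by
            rw [mul_one_div]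
            exact cesaro_le_sqrt_sum_div_sqrt ha (mem_Icc.1 hk).2
      _ ≤ √(∑ i ∈ Icc 1 n, a i) * (2 * √n) := by
          rw [← mul_sum]
          exact mul_le_mul_of_nonneg_left (sum_Icc_one_div_sqrt_le n) (Real.sqrt_nonneg _)
  calc cesaro (cesaro a) n ≤ √(∑ i ∈ Icc 1 n, a i) * (2 * √n) / n :=
        div_le_div_of_nonneg_right sum_le n.cast_nonneg
    _ = 2 * √(cesaro a n) := by
        rw [cesaro, Real.sqrt_div' _ n.cast_nonneg, div_eq_mul_one_div _ (√(n : ℝ)),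
          ← Real.sqrt_div_self']
        ring

/-- Let `A ⊆ [0,1]`. There is no sequence `a` with all terms in `A` together with a
sequence of indices `(λ_n)` such that `[T(a)]_{λ_n} → 0` and `[T²(a)]_{λ_n} → 1`. -/
theorem no_simultaneous_approximation (A : Set ℝ) (hA : A ⊆ Set.Icc (0 : ℝ) 1) :
    ¬ ∃ (a : ℕ → ℝ) (lam : ℕ → ℕ), (∀ i, 1 ≤ i → a i ∈ A) ∧ (∀ n, 1 ≤ lam n) ∧
      Filter.Tendsto (fun n => cesaro a (lam n)) Filter.atTop (nhds 0) ∧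
      Filter.Tendsto (fun n => cesaro (cesaro a) (lam n)) Filter.atTop (nhds 1) := by
  rintro ⟨a, lam, haA, -, hT, hT2⟩
  have hbound : Tendsto (fun n => 2 * √(cesaro a (lam n))) atTop (𝓝 0) := by
    simpa using hT.sqrt.const_mul 2
  have h : (1 : ℝ) ≤ 0 := le_of_tendsto_of_tendsto' hT2 hbound fun n =>
    cesaro_cesaro_le_two_mul_sqrt_cesaro (fun i hi => hA (haA i hi)) (lam n)
  norm_num at h
end
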